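/- arXiv:1109.2574 — 6 statements merged into one kernel-verified Lean document; each statement's English description precedes it below -/
import Mathlib

section
/- Let n ≥ 1 and let γ = (τ, s) be a skew-symmetric (n,n)-clan on 2n positions that avoids the pattern (1,2,1,2). Then the permutation u(γ) ∈ S_{2n} is a signed element of S_{2n}, i.e., u(γ)(2n+1−k) = 2n+1−u(γ)(k) for all k ∈ {1,…,2n}. -/
/-!
Skew-symmetry makes the reversal `i ↦ 2n+1-i` exchange the set `A` with its complement.
Conjugating `u(γ)` by the reversal therefore yields a permutation that again maps `A`
decreasingly onto the lower half of the values and the complement decreasingly onto the upper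
half. Such a permutation is unique, since the value at `i` is determined by counting the later
positions of the same class, so the conjugate is `u(γ)` itself.
-/

open Finset

theorem Finset.strictMonoOn_card_filter_lt {β : Type*} [LinearOrder β] (T : Finset β) :
    StrictMonoOn (fun v => #{u ∈ T | u < v}) T := by
  intro v hv w _ hvw
  refine card_lt_card ((ssubset_iff_of_subset fun u hu => ?_).2 ⟨v, ?_, ?_⟩)
  · simp only [mem_filter] at hu ⊢
    exact ⟨hu.1, hu.2.trans hvw⟩
  · exact mem_filter.2 ⟨hv, hvw⟩
  · simp

section RankCount

variable {α β : Type*} [Fintype α] [LinearOrder α] [LinearOrder β] (e : α ≃ β)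
  {Q : α → Prop} [DecidablePred Q] {T : Finset β}

theorem Equiv.card_filter_gt_eq_card_filter_lt (hQ : ∀ j, Q j ↔ e j ∈ T)
    (hanti : StrictAntiOn e {j | Q j}) {i : α} (hi : Q i) :
    #{j | Q j ∧ i < j} = #{v ∈ T | v < e i} := by
  have hlt : ∀ j, Q j → (i < j ↔ e j < e i) := fun j hj => (hanti.lt_iff_gt hj hi).symm
  refine card_nbij' e e.symm (fun j hj => ?_) (fun v hv => ?_) (fun j _ => by simp)
    (fun v _ => by simp)
  · simp only [coe_filter, mem_univ, true_and, Set.mem_ofPred_eq] at hj ⊢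
    exact ⟨(hQ j).1 hj.1, (hlt j hj.1).1 hj.2⟩
  · simp only [coe_filter, mem_univ, true_and, Set.mem_ofPred_eq] at hv ⊢
    have hQv : Q (e.symm v) := (hQ _).2 (by simpa using hv.1)
    exact ⟨hQv, (hlt _ hQv).2 (by simpa using hv.2)⟩

theorem Equiv.apply_eq_of_strictAntiOn {e' : α ≃ β} (hQ : ∀ j, Q j ↔ e j ∈ T)
    (hQ' : ∀ j, Q j ↔ e' j ∈ T) (hanti : StrictAntiOn e {j | Q j})
    (hanti' : StrictAntiOn e' {j | Q j}) {i : α} (hi : Q i) : e i = e' i :=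
  T.strictMonoOn_card_filter_lt.injOn ((hQ i).1 hi) ((hQ' i).1 hi) <| by
    simp only [← e.card_filter_gt_eq_card_filter_lt hQ hanti hi,
      ← e'.card_filter_gt_eq_card_filter_lt hQ' hanti' hi]

end RankCount

theorem Fin.val_rev_lt_iff {n : ℕ} (x : Fin (2 * n)) : (x.rev : ℕ) < n ↔ ¬(x : ℕ) < n := by
  have := x.isLt
  rw [Fin.val_rev]
  omega

/-- For a `(p, q)`-clan `γ = (τ, s)`, `u(γ)` is the unique `π` with
`IsClanPerm (IsPlusOrPairEnd τ s) p π`. -/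
def IsClanPerm {m : ℕ} (P : Fin m → Prop) (p : ℕ) (π : Equiv.Perm (Fin m)) : Prop :=
  (∀ i, P i ↔ (π i : ℕ) < p) ∧ StrictAntiOn π {i | P i} ∧ StrictAntiOn π {i | ¬P i}

namespace IsClanPerm

variable {m p : ℕ} {P : Fin m → Prop} {π σ : Equiv.Perm (Fin m)}

theorem eq (hπ : IsClanPerm P p π) (hσ : IsClanPerm P p σ) : π = σ := by
  classical
  ext i
  by_cases hi : P i
  · exact congrArg Fin.val <| π.apply_eq_of_strictAntiOn (T := {v | (v : ℕ) < p})
      (fun j => (hπ.1 j).trans (by simp)) (fun j => (hσ.1 j).trans (by simp))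
      hπ.2.1 hσ.2.1 hi
  · exact congrArg Fin.val <| π.apply_eq_of_strictAntiOn (T := {v | ¬(v : ℕ) < p})
      (fun j => (not_congr (hπ.1 j)).trans (by simp))
      (fun j => (not_congr (hσ.1 j)).trans (by simp)) hπ.2.2 hσ.2.2 hi

theorem conj_rev {n : ℕ} {P : Fin (2 * n) → Prop} {π : Equiv.Perm (Fin (2 * n))}
    (hP : ∀ i, P i.rev ↔ ¬P i) (hπ : IsClanPerm P n π) :
    IsClanPerm P n (Fin.revPerm.trans (π.trans Fin.revPerm)) := by
  refine ⟨fun i => ?_, fun i hi j hj hij => ?_, fun i hi j hj hij => ?_⟩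
  · simp only [Equiv.trans_apply, Fin.revPerm_apply, Fin.val_rev_lt_iff, ← hπ.1]
    simpa using hP i.rev
  all_goals
    simp only [Equiv.trans_apply, Fin.revPerm_apply, Fin.rev_lt_rev]
  · exact hπ.2.2 (by simpa [hP] using hj) (by simpa [hP] using hi) (Fin.rev_lt_rev.2 hij)
  · exact hπ.2.1 (by simpa [hP] using hj) (by simpa [hP] using hi) (Fin.rev_lt_rev.2 hij)

end IsClanPerm

def IsPlusOrPairEnd {m : ℕ} (τ : Fin m → Fin m) (s : Fin m → ℤ) (i : Fin m) : Prop :=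
  (τ i = i ∧ s i = 1) ∨ τ i < i

theorem isPlusOrPairEnd_rev_iff {m : ℕ} {τ : Fin m → Fin m} {s : Fin m → ℤ}
    (hsgn : ∀ i, τ i = i → s i = 1 ∨ s i = -1) (hskew₁ : ∀ i, τ i.rev = (τ i).rev)
    (hskew₂ : ∀ i, τ i = i → τ i.rev = i.rev ∧ s i.rev = -s i) (i : Fin m) :
    IsPlusOrPairEnd τ s i.rev ↔ ¬IsPlusOrPairEnd τ s i := by
  unfold IsPlusOrPairEnd
  by_cases hfix : τ i = i
  · obtain ⟨hfix', hs'⟩ := hskew₂ i hfix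
    rcases hsgn i hfix with hs | hs <;> simp [hfix, hfix', hs', hs]
  · have hfix' : (τ i).rev ≠ i.rev := Fin.rev_injective.ne hfix
    simp only [hfix, hfix', false_and, false_or, hskew₁, Fin.rev_lt_rev, not_lt]
    exact ⟨le_of_lt, fun h => h.lt_of_ne' hfix⟩

theorem stmt_0_general (n : ℕ)
    (τ : Equiv.Perm (Fin (2 * n))) (s : Fin (2 * n) → ℤ)
    -- signs of fixed points are ±1
    (hsgn : ∀ i, τ i = i → s i = 1 ∨ s i = -1)
    -- skew-symmetry: τ ∘ ρ = ρ ∘ τ (with ρ(i) = 2n+1-i, i.e. `Fin.rev`), and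
    -- every fixed point i has ρ(i) fixed with the opposite sign
    (hskew₁ : ∀ i, τ i.rev = (τ i).rev)
    (hskew₂ : ∀ i, τ i = i → τ i.rev = i.rev ∧ s i.rev = - s i)
    -- π = u(γ)
    (π : Equiv.Perm (Fin (2 * n)))
    (hπmem : ∀ i, ((τ i = i ∧ s i = 1) ∨ τ i < i) ↔ (π i : ℕ) < n)
    (hπdecA : ∀ i j : Fin (2 * n), ((τ i = i ∧ s i = 1) ∨ τ i < i) →
        ((τ j = j ∧ s j = 1) ∨ τ j < j) → i < j → π j < π i)
    (hπdecB : ∀ i j : Fin (2 * n), ¬ ((τ i = i ∧ s i = 1) ∨ τ i < i) →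
        ¬ ((τ j = j ∧ s j = 1) ∨ τ j < j) → i < j → π j < π i) :
    ∀ k : Fin (2 * n), π k.rev = (π k).rev := by
  have hπ : IsClanPerm (IsPlusOrPairEnd τ s) n π :=
    ⟨hπmem, fun i hi j hj => hπdecA i j hi hj, fun i hi j hj => hπdecB i j hi hj⟩
  have hconj := hπ.conj_rev (isPlusOrPairEnd_rev_iff hsgn hskew₁ hskew₂)
  intro k
  simpa using (DFunLike.congr_fun (hconj.eq hπ) k.rev).symm

/-- For a skew-symmetric `(n,n)`-clan `γ = (τ, s)` on `2n` positions
(positions modeled zero-based by `Fin (2*n)`) avoiding the pattern `(1,2,1,2)`,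
the permutation `u(γ)` is a signed element of `S_{2n}`.
Here `π = u(γ)` is characterized by: the set
`A = {i : (τ i = i ∧ s i = 1) ∨ τ i < i}` is exactly the set of positions with
value `< n` (zero-based values `n-1, …, 0` correspond to one-based `n, …, 1`),
`π` is strictly decreasing along `A`, and strictly decreasing along the
complement of `A` (whose values are the zero-based `2n-1, …, n`). -/
theorem stmt_0 (n : ℕ) (hn : 1 ≤ n)
    (τ : Equiv.Perm (Fin (2 * n))) (s : Fin (2 * n) → ℤ)
    -- τ is an involution
    (hinv : ∀ i, τ (τ i) = i)
    -- signs of fixed points are ±1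
    (hsgn : ∀ i, τ i = i → s i = 1 ∨ s i = -1)
    -- (n,n)-clan: #(plus fixed points) - #(minus fixed points) = n - n = 0
    (hbal : (Finset.univ.filter (fun i => τ i = i ∧ s i = 1)).card
          = (Finset.univ.filter (fun i => τ i = i ∧ s i = -1)).card)
    -- skew-symmetry: τ ∘ ρ = ρ ∘ τ (with ρ(i) = 2n+1-i, i.e. `Fin.rev`), and
    -- every fixed point i has ρ(i) fixed with the opposite sign
    (hskew₁ : ∀ i, τ i.rev = (τ i).rev)
    (hskew₂ : ∀ i, τ i = i → τ i.rev = i.rev ∧ s i.rev = - s i)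
    -- γ avoids the pattern (1,2,1,2)
    (havoid : ¬ ∃ i j k l : Fin (2 * n), i < j ∧ j < k ∧ k < l ∧ τ i = k ∧ τ j = l)
    -- π = u(γ)
    (π : Equiv.Perm (Fin (2 * n)))
    (hπmem : ∀ i, ((τ i = i ∧ s i = 1) ∨ τ i < i) ↔ (π i : ℕ) < n)
    (hπdecA : ∀ i j : Fin (2 * n), ((τ i = i ∧ s i = 1) ∨ τ i < i) →
        ((τ j = j ∧ s j = 1) ∨ τ j < j) → i < j → π j < π i)
    (hπdecB : ∀ i j : Fin (2 * n), ¬ ((τ i = i ∧ s i = 1) ∨ τ i < i) →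
        ¬ ((τ j = j ∧ s j = 1) ∨ τ j < j) → i < j → π j < π i) :
    ∀ k : Fin (2 * n), π k.rev = (π k).rev :=
  stmt_0_general n τ s hsgn hskew₁ hskew₂ π hπmem hπdecA hπdecB
end

section
/- Let n ≥ 1 and let γ = (τ, s) be a skew-symmetric (n,n)-clan on 2n positions that avoids the pattern (1,2,1,2). Then the permutation v(γ) ∈ S_{2n} is a signed element of S_{2n}, i.e., v(γ)(2n+1−k) = 2n+1−v(γ)(k) for all k ∈ {1,…,2n}. -/
/-!
The set `A'` of plus signs and left ends of arcs determines `v(γ)` completely: `v(γ)` lists `A'`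
first and its complement afterwards, each in increasing order, so `v(γ) i < v(γ) j` holds exactly
when `i` comes before `j` in that listing. Skew-symmetry makes the reflection `ρ` swap `A'` with its
complement (a plus sign is reflected to a minus sign, a left end of an arc to a right end), so
`ρ ∘ v(γ) ∘ ρ` induces the same listing as `v(γ)`, and the two permutations coincide.
-/

open Equiv

theorem Equiv.Perm.eq_of_lt_iff_lt {α : Type*} [LinearOrder α] [Finite α] {π σ : Perm α}
    (h : ∀ i j, π i < π j ↔ σ i < σ j) : π = σ := by
  have hmono : StrictMono (π ∘ σ.symm) := fun a b hab => by
    simpa [h] using hab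
  ext x
  simpa using congrFun hmono.eq_id (σ x)

def PrecedesSplit {α : Type*} [LT α] (P : α → Prop) (i j : α) : Prop :=
  (P i ∧ ¬ P j) ∨ ((P i ↔ P j) ∧ i < j)

theorem Fin.lt_iff_precedesSplit {m n : ℕ} {P : Fin m → Prop} {π : Perm (Fin m)}
    (hmem : ∀ i, P i ↔ (π i : ℕ) < n)
    (hA : StrictMonoOn π {i | P i}) (hB : StrictMonoOn π {i | ¬ P i}) (i j : Fin m) :
    π i < π j ↔ PrecedesSplit P i j := by
  unfold PrecedesSplit
  by_cases hi : P i <;> by_cases hj : P j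
  · simp [hi, hj, hA.lt_iff_lt hi hj]
  · have hi' := (hmem i).mp hi
    have hj' := (hmem j).not.mp hj
    exact iff_of_true (Fin.lt_def.mpr (by omega)) (Or.inl ⟨hi, hj⟩)
  · have hi' := (hmem i).not.mp hi
    have hj' := (hmem j).mp hj
    exact iff_of_false (by rw [Fin.lt_def]; omega) (by tauto)
  · simp [hi, hj, hB.lt_iff_lt hi hj]

theorem Fin.precedesSplit_rev_iff {m : ℕ} {P : Fin m → Prop} (hP : ∀ i, P i.rev ↔ ¬ P i)
    (i j : Fin m) : PrecedesSplit P j.rev i.rev ↔ PrecedesSplit P i j := by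
  unfold PrecedesSplit
  rw [hP, hP, Fin.rev_lt_rev]
  tauto

theorem Fin.apply_rev_of_lt_iff_precedesSplit {m : ℕ} {P : Fin m → Prop}
    (hP : ∀ i, P i.rev ↔ ¬ P i) {π : Perm (Fin m)}
    (hπ : ∀ i j, π i < π j ↔ PrecedesSplit P i j) (k : Fin m) :
    π k.rev = (π k).rev := by
  set σ : Perm (Fin m) := Fin.revPerm.trans (π.trans Fin.revPerm)
  have hσ : σ = π := Perm.eq_of_lt_iff_lt fun i j => by
    change (π i.rev).rev < (π j.rev).rev ↔ _
    rw [Fin.rev_lt_rev, hπ, hπ, Fin.precedesSplit_rev_iff hP]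
  simpa [σ] using congrArg Fin.rev (Perm.ext_iff.mp hσ k)

/-- Membership in the set `A'` of the clan `(τ, s)`. -/
def clanA {m : ℕ} (τ : Perm (Fin m)) (s : Fin m → ℤ) (i : Fin m) : Prop :=
  (τ i = i ∧ s i = 1) ∨ i < τ i

theorem clanA_rev_iff {m : ℕ} {τ : Perm (Fin m)} {s : Fin m → ℤ}
    (hsgn : ∀ i, τ i = i → s i = 1 ∨ s i = -1)
    (hskew₁ : ∀ i, τ i.rev = (τ i).rev)
    (hskew₂ : ∀ i, τ i = i → τ i.rev = i.rev ∧ s i.rev = - s i) (i : Fin m) :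
    clanA τ s i.rev ↔ ¬ clanA τ s i := by
  unfold clanA
  by_cases hfix : τ i = i
  · obtain ⟨hfix', hs⟩ := hskew₂ i hfix
    rw [hfix', hfix, hs]
    rcases hsgn i hfix with h | h <;> simp [h]
  · have hfix' : τ i.rev ≠ i.rev := by
      rw [hskew₁]
      exact fun h => hfix (Fin.rev_injective h)
    rw [hskew₁, Fin.rev_lt_rev]
    have : τ i < i ↔ ¬ i < τ i := by
      rw [not_lt]
      exact ⟨le_of_lt, fun h => lt_of_le_of_ne h hfix⟩
    simp [hfix, this]

theorem stmt_1_general (n : ℕ)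
    (τ : Equiv.Perm (Fin (2 * n))) (s : Fin (2 * n) → ℤ)
    -- signs of fixed points are ±1
    (hsgn : ∀ i, τ i = i → s i = 1 ∨ s i = -1)
    -- skew-symmetry: τ ∘ ρ = ρ ∘ τ (with ρ(i) = 2n+1-i, i.e. `Fin.rev`), and
    -- every fixed point i has ρ(i) fixed with the opposite sign
    (hskew₁ : ∀ i, τ i.rev = (τ i).rev)
    (hskew₂ : ∀ i, τ i = i → τ i.rev = i.rev ∧ s i.rev = - s i)
    -- π = v(γ)
    (π : Equiv.Perm (Fin (2 * n)))
    (hπmem : ∀ i, ((τ i = i ∧ s i = 1) ∨ i < τ i) ↔ (π i : ℕ) < n)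
    (hπincA : ∀ i j : Fin (2 * n), ((τ i = i ∧ s i = 1) ∨ i < τ i) →
        ((τ j = j ∧ s j = 1) ∨ j < τ j) → i < j → π i < π j)
    (hπincB : ∀ i j : Fin (2 * n), ¬ ((τ i = i ∧ s i = 1) ∨ i < τ i) →
        ¬ ((τ j = j ∧ s j = 1) ∨ j < τ j) → i < j → π i < π j) :
    ∀ k : Fin (2 * n), π k.rev = (π k).rev :=
  Fin.apply_rev_of_lt_iff_precedesSplit (clanA_rev_iff hsgn hskew₁ hskew₂)
    (Fin.lt_iff_precedesSplit (P := clanA τ s) hπmem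
      (fun i hi j hj => hπincA i j hi hj) (fun i hi j hj => hπincB i j hi hj))

/-- For a skew-symmetric `(n,n)`-clan `γ = (τ, s)` on `2n` positions
(positions modeled zero-based by `Fin (2*n)`) avoiding the pattern `(1,2,1,2)`,
the permutation `v(γ)` is a signed element of `S_{2n}`.
Here `π = v(γ)` is characterized by: the set
`A' = {i : (τ i = i ∧ s i = 1) ∨ i < τ i}` is exactly the set of positions with
value `< n` (zero-based values `0, …, n-1` correspond to one-based `1, …, n`),
`π` is strictly increasing along `A'`, and strictly increasing along the
complement of `A'` (whose values are the zero-based `n, …, 2n-1`). -/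
theorem stmt_1 (n : ℕ) (hn : 1 ≤ n)
    (τ : Equiv.Perm (Fin (2 * n))) (s : Fin (2 * n) → ℤ)
    -- τ is an involution
    (hinv : ∀ i, τ (τ i) = i)
    -- signs of fixed points are ±1
    (hsgn : ∀ i, τ i = i → s i = 1 ∨ s i = -1)
    -- (n,n)-clan: #(plus fixed points) - #(minus fixed points) = n - n = 0
    (hbal : (Finset.univ.filter (fun i => τ i = i ∧ s i = 1)).card
          = (Finset.univ.filter (fun i => τ i = i ∧ s i = -1)).card)
    -- skew-symmetry: τ ∘ ρ = ρ ∘ τ (with ρ(i) = 2n+1-i, i.e. `Fin.rev`), and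
    -- every fixed point i has ρ(i) fixed with the opposite sign
    (hskew₁ : ∀ i, τ i.rev = (τ i).rev)
    (hskew₂ : ∀ i, τ i = i → τ i.rev = i.rev ∧ s i.rev = - s i)
    -- γ avoids the pattern (1,2,1,2)
    (havoid : ¬ ∃ i j k l : Fin (2 * n), i < j ∧ j < k ∧ k < l ∧ τ i = k ∧ τ j = l)
    -- π = v(γ)
    (π : Equiv.Perm (Fin (2 * n)))
    (hπmem : ∀ i, ((τ i = i ∧ s i = 1) ∨ i < τ i) ↔ (π i : ℕ) < n)
    (hπincA : ∀ i j : Fin (2 * n), ((τ i = i ∧ s i = 1) ∨ i < τ i) →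
        ((τ j = j ∧ s j = 1) ∨ j < τ j) → i < j → π i < π j)
    (hπincB : ∀ i j : Fin (2 * n), ¬ ((τ i = i ∧ s i = 1) ∨ i < τ i) →
        ¬ ((τ j = j ∧ s j = 1) ∨ j < τ j) → i < j → π i < π j) :
    ∀ k : Fin (2 * n), π k.rev = (π k).rev :=
  stmt_1_general n τ s hsgn hskew₁ hskew₂ π hπmem hπincA hπincB
end

section
/- Let n ≥ 1 and let γ = (τ, s) be a skew-symmetric (n,n)-clan on 2n positions that avoids the pattern (1,2,1,2). Then for every i with 1 ≤ i ≤ n and τ(i) ≠ i, either τ(i) ≤ n or τ(i) = 2n+1−i. In particular, if moreover τ(j) ≠ 2n+1−j for all j (as is the case for a type D clan), then the mate of any natural number occurring among the first n positions also occurs among the first n positions: τ(i) ≤ n. -/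
/-- For a skew-symmetric `(n,n)`-clan `γ = (τ, s)` on `2n` positions
(modeled zero-based by `Fin (2*n)`, so "position `i ≤ n`" becomes `(i : ℕ) < n`
and "position `2n+1-i`" becomes `i.rev`) avoiding the pattern `(1,2,1,2)`:
for every `i` among the first `n` positions with `τ i ≠ i`, either `τ i` is also
among the first `n` positions or `τ i = i.rev`.  In particular, if moreover
`τ j ≠ j.rev` for all `j` (as for a type D clan), then the mate of any natural
number occurring among the first `n` positions also occurs among the first `n`
positions. -/
theorem stmt_2 (n : ℕ) (hn : 1 ≤ n)
    (τ : Equiv.Perm (Fin (2 * n))) (s : Fin (2 * n) → ℤ)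
    -- τ is an involution
    (hinv : ∀ i, τ (τ i) = i)
    -- signs of fixed points are ±1
    (hsgn : ∀ i, τ i = i → s i = 1 ∨ s i = -1)
    -- (n,n)-clan: #(plus fixed points) - #(minus fixed points) = n - n = 0
    (hbal : (Finset.univ.filter (fun i => τ i = i ∧ s i = 1)).card
          = (Finset.univ.filter (fun i => τ i = i ∧ s i = -1)).card)
    -- skew-symmetry
    (hskew₁ : ∀ i, τ i.rev = (τ i).rev)
    (hskew₂ : ∀ i, τ i = i → τ i.rev = i.rev ∧ s i.rev = - s i)
    -- γ avoids the pattern (1,2,1,2)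
    (havoid : ¬ ∃ i j k l : Fin (2 * n), i < j ∧ j < k ∧ k < l ∧ τ i = k ∧ τ j = l) :
    (∀ i : Fin (2 * n), (i : ℕ) < n → τ i ≠ i → ((τ i : ℕ) < n ∨ τ i = i.rev)) ∧
    ((∀ j : Fin (2 * n), τ j ≠ j.rev) →
      ∀ i : Fin (2 * n), (i : ℕ) < n → τ i ≠ i → (τ i : ℕ) < n) := by

  have main : ∀ i : Fin (2 * n), (i : ℕ) < n → τ i ≠ i → ((τ i : ℕ) < n ∨ τ i = i.rev) := by
    intro i hi _
    by_contra hcon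
    push_neg at hcon
    obtain ⟨hk, hne⟩ := hcon
    set k := τ i with hkdef
    have hτkr : τ k.rev = i.rev := by
      rw [hskew₁ k, hkdef, hinv]
    have hkrev : (k.rev : ℕ) = 2 * n - ((k : ℕ) + 1) := Fin.val_rev k
    have hirev : (i.rev : ℕ) = 2 * n - ((i : ℕ) + 1) := Fin.val_rev i
    have hklt : (k : ℕ) < 2 * n := k.isLt
    have hilt : (i : ℕ) < 2 * n := i.isLt
    -- i ≠ k.rev
    have hne' : (i : ℕ) ≠ (k.rev : ℕ) := by
      intro h
      apply hne
      have : i = k.rev := Fin.ext h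
      rw [this, Fin.rev_rev]
    rcases lt_or_gt_of_ne hne' with h1 | h1
    · -- pattern i < k.rev < k < i.rev
      exact havoid ⟨i, k.rev, k, i.rev, by rw [Fin.lt_def]; omega,
        by rw [Fin.lt_def]; omega, by rw [Fin.lt_def]; omega, rfl, hτkr⟩
    · -- pattern k.rev < i < i.rev < k
      exact havoid ⟨k.rev, i, i.rev, k, by rw [Fin.lt_def]; omega,
        by rw [Fin.lt_def]; omega, by rw [Fin.lt_def]; omega, hτkr, rfl⟩
  refine ⟨main, fun hD i hi hne => ?_⟩
  rcases main i hi hne with h | h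
  · exact h
  · exact absurd h (hD i)
end

section
/- Let n ≥ 1 and let γ = (τ, s) be a type D clan on 2n positions that avoids the pattern (1,2,1,2). Then u(γ) is a type D element of S_{2n}: it is a signed element and #{i ∈ {1,…,n} : u(γ)(i) > n} is even. -/
/-!
Write `A` for the set of `+` signs and right ends of arcs of `γ`, so that `u(γ)` lists `A` in
decreasing order onto the values below `n` and the complement of `A` in decreasing order onto
the values from `n` on; these two conditions determine `u(γ)`. Skew-symmetry says that `Fin.rev`
exchanges `A` and its complement, so conjugating `u(γ)` by `Fin.rev` yields a permutation with
the same description, hence `u(γ)` itself: `u(γ)` is signed.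

Among the first `n` positions, `u(γ)` sends above `n` exactly those outside `A`: the `-` signs,
the left ends of arcs closing before `n`, and the left ends of arcs crossing the middle. The first
two counts have even sum by the type D condition, and the crossing arcs are paired off by the
involution `i ↦ rev (τ i)`, which has no fixed point because `τ i ≠ rev i`.
-/

open Finset Equiv

theorem Finset.even_card_of_involutive {α : Type*} [LinearOrder α] {s : Finset α} {f : α → α}
    (hf : Function.Involutive f) (hfix : ∀ i, f i ≠ i) (hs : ∀ i ∈ s, f i ∈ s) : Even #s := by
  have hswap : #(s.filter fun i => ¬ i < f i) = #(s.filter fun i => i < f i) := by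
    refine card_nbij' f f (fun i hi => ?_) (fun i hi => ?_) (fun i _ => hf i) (fun i _ => hf i)
    · simp only [coe_filter, Set.mem_ofPred_eq, not_lt] at hi ⊢
      rw [hf i]
      exact ⟨hs i hi.1, lt_of_le_of_ne hi.2 (hfix i)⟩
    · simp only [coe_filter, Set.mem_ofPred_eq, not_lt] at hi ⊢
      rw [hf i]
      exact ⟨hs i hi.1, hi.2.le⟩
  rw [← card_filter_add_card_filter_not (s := s) (fun i => i < f i), hswap]
  exact ⟨_, rfl⟩

theorem Equiv.Perm.val_eq_add_card_of_strictAntiOn {m a b : ℕ} {π : Perm (Fin m)}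
    {Q : Fin m → Prop} [DecidablePred Q] (hQ : ∀ i, Q i ↔ a ≤ π i ∧ (π i : ℕ) < b)
    (hanti : StrictAntiOn π {i | Q i}) {i : Fin m} (hi : Q i) :
    (π i : ℕ) = a + #{j | Q j ∧ i < j} := by
  have himage : (univ.filter fun j => Q j ∧ i < j).image (fun j => (π j : ℕ)) = Ico a (π i) := by
    ext v
    simp only [mem_image, mem_filter, mem_univ, true_and, mem_Ico]
    constructor
    · rintro ⟨j, ⟨hj, hij⟩, rfl⟩
      exact ⟨((hQ j).1 hj).1, hanti hi hj hij⟩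
    · rintro ⟨hav, hvi⟩
      set j := π.symm ⟨v, hvi.trans (π i).isLt⟩
      have hπj : (π j : ℕ) = v := by simp [j]
      have hj : Q j := (hQ j).2 ⟨hπj ▸ hav, hπj ▸ hvi.trans ((hQ i).1 hi).2⟩
      refine ⟨j, ⟨hj, lt_of_not_ge fun hji => ?_⟩, hπj⟩
      have := Fin.le_def.mp (hanti.antitoneOn hj hi hji)
      omega
  have hcard := congrArg card himage
  rw [card_image_of_injective _ fun j k h => π.injective (Fin.ext h), Nat.card_Ico] at hcard
  have := ((hQ i).1 hi).1
  omega

/-- `π = u(A)`, with zero-based values: `A` is listed in decreasing order onto `0, …, n - 1`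
and its complement in decreasing order onto `n, …, m - 1`. -/
structure IsUPerm {m : ℕ} (A : Fin m → Prop) (n : ℕ) (π : Perm (Fin m)) : Prop where
  mem_iff : ∀ i, A i ↔ (π i : ℕ) < n
  strictAntiOn_mem : StrictAntiOn π {i | A i}
  strictAntiOn_not_mem : StrictAntiOn π {i | ¬ A i}

namespace IsUPerm

variable {m n : ℕ} {A : Fin m → Prop} {π : Perm (Fin m)}

theorem val_eq_card_of_mem [DecidablePred A] (hπ : IsUPerm A n π) {i : Fin m} (hi : A i) :
    (π i : ℕ) = #{j | A j ∧ i < j} := by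
  simpa using π.val_eq_add_card_of_strictAntiOn (a := 0)
    (fun j => by simpa using hπ.mem_iff j) hπ.strictAntiOn_mem hi

theorem val_eq_add_card_of_not_mem [DecidablePred A] (hπ : IsUPerm A n π) {i : Fin m} (hi : ¬ A i) :
    (π i : ℕ) = n + #{j | ¬ A j ∧ i < j} :=
  π.val_eq_add_card_of_strictAntiOn (b := m)
    (fun j => by simp [hπ.mem_iff j, (π j).isLt]) hπ.strictAntiOn_not_mem hi

theorem unique {σ : Perm (Fin m)} (hπ : IsUPerm A n π) (hσ : IsUPerm A n σ) : π = σ := by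
  classical
  ext i
  by_cases hi : A i
  · rw [hπ.val_eq_card_of_mem hi, hσ.val_eq_card_of_mem hi]
  · rw [hπ.val_eq_add_card_of_not_mem hi, hσ.val_eq_add_card_of_not_mem hi]

theorem conj_rev {A : Fin (2 * n) → Prop} {π : Perm (Fin (2 * n))} (hπ : IsUPerm A n π)
    (hA : ∀ i, A i.rev ↔ ¬ A i) : IsUPerm A n (Fin.revPerm.trans (π.trans Fin.revPerm)) := by
  have hA' (i) : ¬ A i.rev ↔ A i := by rw [hA, not_not]
  refine ⟨fun i => ?_, fun i hi j hj hij => ?_, fun i hi j hj hij => ?_⟩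
  · have := (π i.rev).isLt
    rw [← hA', hπ.mem_iff]
    simp only [trans_apply, Fin.revPerm_apply, Fin.val_rev]
    omega
  · simpa using hπ.strictAntiOn_not_mem ((hA' j).2 hj) ((hA' i).2 hi) (Fin.rev_lt_rev.2 hij)
  · simpa using hπ.strictAntiOn_mem ((hA j).2 hj) ((hA i).2 hi) (Fin.rev_lt_rev.2 hij)

theorem map_rev {A : Fin (2 * n) → Prop} {π : Perm (Fin (2 * n))}
    (hπ : IsUPerm A n π) (hA : ∀ i, A i.rev ↔ ¬ A i) (k : Fin (2 * n)) :
    π k.rev = (π k).rev := by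
  have hconj := congrArg (fun σ : Perm _ => σ k) ((hπ.conj_rev hA).unique hπ)
  simp only [trans_apply, Fin.revPerm_apply] at hconj
  rw [← hconj, Fin.rev_rev]

end IsUPerm

section Clan

variable {m : ℕ} {τ : Perm (Fin m)} {s : Fin m → ℤ}

/-- The set `A` in the definition of `u(γ)`. -/
def PlusOrRightEnd (τ : Perm (Fin m)) (s : Fin m → ℤ) (i : Fin m) : Prop :=
  (τ i = i ∧ s i = 1) ∨ τ i < i

instance : DecidablePred (PlusOrRightEnd τ s) := fun i => by
  unfold PlusOrRightEnd; infer_instance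

theorem not_plusOrRightEnd_iff (hsgn : ∀ i, τ i = i → s i = 1 ∨ s i = -1) (i : Fin m) :
    ¬ PlusOrRightEnd τ s i ↔ (τ i = i ∧ s i = -1) ∨ i < τ i := by
  unfold PlusOrRightEnd
  rcases lt_trichotomy (τ i) i with h | h | h
  · simp [h, h.ne, h.not_gt]
  · rcases hsgn i h with hs | hs <;> simp [h, hs]
  · simp [h, h.ne', h.not_gt]

theorem plusOrRightEnd_rev_iff (hsgn : ∀ i, τ i = i → s i = 1 ∨ s i = -1)
    (hskew₁ : ∀ i, τ i.rev = (τ i).rev)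
    (hskew₂ : ∀ i, τ i = i → τ i.rev = i.rev ∧ s i.rev = - s i) (i : Fin m) :
    PlusOrRightEnd τ s i.rev ↔ ¬ PlusOrRightEnd τ s i := by
  rw [not_plusOrRightEnd_iff hsgn, PlusOrRightEnd, hskew₁, Fin.rev_inj, Fin.rev_lt_rev]
  refine or_congr_left ⟨fun ⟨hfix, hs⟩ => ⟨hfix, ?_⟩, fun ⟨hfix, hs⟩ => ⟨hfix, ?_⟩⟩ <;>
    linarith [(hskew₂ i hfix).2]

end Clan

section TypeD

variable {n : ℕ} {τ : Perm (Fin (2 * n))} {s : Fin (2 * n) → ℤ}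

theorem even_card_crossing (hinv : ∀ i, τ (τ i) = i) (hskew₁ : ∀ i, τ i.rev = (τ i).rev)
    (hD₁ : ∀ i, τ i ≠ i.rev) : Even #{i : Fin (2 * n) | (i : ℕ) < n ∧ n ≤ (τ i : ℕ)} := by
  have hτrev (i : Fin (2 * n)) : τ (τ i).rev = i.rev := by rw [hskew₁, hinv]
  refine even_card_of_involutive (f := fun i => (τ i).rev) (fun i => ?_) (fun i => ?_)
    (fun i hi => ?_)
  · simp only [hτrev, Fin.rev_rev]
  · exact fun h => hD₁ i (by simpa using congrArg Fin.rev h)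
  · simp only [mem_filter, mem_univ, true_and, hτrev, Fin.val_rev] at hi ⊢
    omega

theorem card_lt_not_plusOrRightEnd (hsgn : ∀ i, τ i = i → s i = 1 ∨ s i = -1) :
    #{i : Fin (2 * n) | (i : ℕ) < n ∧ ¬ PlusOrRightEnd τ s i} =
      #{i : Fin (2 * n) | (i : ℕ) < n ∧ τ i = i ∧ s i = -1} +
        #{i : Fin (2 * n) | i < τ i ∧ (τ i : ℕ) < n} +
          #{i : Fin (2 * n) | (i : ℕ) < n ∧ n ≤ (τ i : ℕ)} := by
  rw [← card_union_of_disjoint, ← card_union_of_disjoint]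
  · congr 1
    ext i
    simp only [mem_union, mem_filter, mem_univ, true_and, not_plusOrRightEnd_iff hsgn,
      Fin.lt_def, Fin.ext_iff]
    omega
  all_goals
    refine disjoint_left.2 fun i h₁ h₂ => ?_
    simp only [mem_union, mem_filter, mem_univ, true_and, Fin.lt_def, Fin.ext_iff] at h₁ h₂
    omega

end TypeD

theorem stmt_3_general (n : ℕ)
    (τ : Equiv.Perm (Fin (2 * n))) (s : Fin (2 * n) → ℤ)
    -- τ is an involution
    (hinv : ∀ i, τ (τ i) = i)
    -- signs of fixed points are ±1
    (hsgn : ∀ i, τ i = i → s i = 1 ∨ s i = -1)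
    -- skew-symmetry
    (hskew₁ : ∀ i, τ i.rev = (τ i).rev)
    (hskew₂ : ∀ i, τ i = i → τ i.rev = i.rev ∧ s i.rev = - s i)
    -- type D conditions
    (hD₁ : ∀ i : Fin (2 * n), τ i ≠ i.rev)
    (hD₂ : Even ((Finset.univ.filter (fun i : Fin (2 * n) =>
              (i : ℕ) < n ∧ τ i = i ∧ s i = -1)).card
          + (Finset.univ.filter (fun i : Fin (2 * n) =>
              i < τ i ∧ (τ i : ℕ) < n)).card))
    -- π = u(γ)
    (π : Equiv.Perm (Fin (2 * n)))
    (hπmem : ∀ i, ((τ i = i ∧ s i = 1) ∨ τ i < i) ↔ (π i : ℕ) < n)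
    (hπdecA : ∀ i j : Fin (2 * n), ((τ i = i ∧ s i = 1) ∨ τ i < i) →
        ((τ j = j ∧ s j = 1) ∨ τ j < j) → i < j → π j < π i)
    (hπdecB : ∀ i j : Fin (2 * n), ¬ ((τ i = i ∧ s i = 1) ∨ τ i < i) →
        ¬ ((τ j = j ∧ s j = 1) ∨ τ j < j) → i < j → π j < π i) :
    (∀ k : Fin (2 * n), π k.rev = (π k).rev) ∧
    Even (Finset.univ.filter (fun i : Fin (2 * n) =>
        (i : ℕ) < n ∧ n ≤ (π i : ℕ))).card := by
  have hπ : IsUPerm (PlusOrRightEnd τ s) n π :=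
    ⟨hπmem, fun i hi j hj => hπdecA i j hi hj, fun i hi j hj => hπdecB i j hi hj⟩
  refine ⟨hπ.map_rev (plusOrRightEnd_rev_iff hsgn hskew₁ hskew₂), ?_⟩
  have hlower : #{i : Fin (2 * n) | (i : ℕ) < n ∧ n ≤ (π i : ℕ)} =
      #{i : Fin (2 * n) | (i : ℕ) < n ∧ ¬ PlusOrRightEnd τ s i} := by
    simp only [hπ.mem_iff, not_lt]
  rw [hlower, card_lt_not_plusOrRightEnd hsgn]
  exact hD₂.add (even_card_crossing hinv hskew₁ hD₁)

/-- For a type D clan `γ = (τ, s)` on `2n` positions (a skew-symmetric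
`(n,n)`-clan with `τ i ≠ i.rev` for all `i` and with
`#{i ≤ n : τ i = i ∧ s i = -1} + #{i : i < τ i ≤ n}` even) avoiding the pattern
`(1,2,1,2)`, the permutation `u(γ)` is a type D element of `S_{2n}`:
it is a signed element and `#{i ∈ {1,…,n} : u(γ)(i) > n}` is even.
(Positions/values are modeled zero-based by `Fin (2*n)`: "`i ≤ n`" becomes
`(i : ℕ) < n` and "value `> n`" becomes `n ≤ (π i : ℕ)`.) -/
theorem stmt_3 (n : ℕ) (hn : 1 ≤ n)
    (τ : Equiv.Perm (Fin (2 * n))) (s : Fin (2 * n) → ℤ)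
    -- τ is an involution
    (hinv : ∀ i, τ (τ i) = i)
    -- signs of fixed points are ±1
    (hsgn : ∀ i, τ i = i → s i = 1 ∨ s i = -1)
    -- (n,n)-clan: #(plus fixed points) - #(minus fixed points) = n - n = 0
    (hbal : (Finset.univ.filter (fun i => τ i = i ∧ s i = 1)).card
          = (Finset.univ.filter (fun i => τ i = i ∧ s i = -1)).card)
    -- skew-symmetry
    (hskew₁ : ∀ i, τ i.rev = (τ i).rev)
    (hskew₂ : ∀ i, τ i = i → τ i.rev = i.rev ∧ s i.rev = - s i)
    -- type D conditions
    (hD₁ : ∀ i : Fin (2 * n), τ i ≠ i.rev)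
    (hD₂ : Even ((Finset.univ.filter (fun i : Fin (2 * n) =>
              (i : ℕ) < n ∧ τ i = i ∧ s i = -1)).card
          + (Finset.univ.filter (fun i : Fin (2 * n) =>
              i < τ i ∧ (τ i : ℕ) < n)).card))
    -- γ avoids the pattern (1,2,1,2)
    (havoid : ¬ ∃ i j k l : Fin (2 * n), i < j ∧ j < k ∧ k < l ∧ τ i = k ∧ τ j = l)
    -- π = u(γ)
    (π : Equiv.Perm (Fin (2 * n)))
    (hπmem : ∀ i, ((τ i = i ∧ s i = 1) ∨ τ i < i) ↔ (π i : ℕ) < n)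
    (hπdecA : ∀ i j : Fin (2 * n), ((τ i = i ∧ s i = 1) ∨ τ i < i) →
        ((τ j = j ∧ s j = 1) ∨ τ j < j) → i < j → π j < π i)
    (hπdecB : ∀ i j : Fin (2 * n), ¬ ((τ i = i ∧ s i = 1) ∨ τ i < i) →
        ¬ ((τ j = j ∧ s j = 1) ∨ τ j < j) → i < j → π j < π i) :
    (∀ k : Fin (2 * n), π k.rev = (π k).rev) ∧
    Even (Finset.univ.filter (fun i : Fin (2 * n) =>
        (i : ℕ) < n ∧ n ≤ (π i : ℕ))).card :=
  stmt_3_general n τ s hinv hsgn hskew₁ hskew₂ hD₁ hD₂ π hπmem hπdecA hπdecB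
end

section
/- Let n ≥ 1 and let γ = (τ, s) be a type D clan on 2n positions that avoids the pattern (1,2,1,2). Then v(γ) is a type D element of S_{2n}: it is a signed element and #{i ∈ {1,…,n} : v(γ)(i) > n} is even. -/
/-!
Skew-symmetry of the clan says that `i ↦ i.rev` maps the set `A′` of plus signs and left ends
of pairs onto its complement. Conjugating `v(γ)` by `rev` therefore gives again a permutation
listing `A′` in increasing order before its complement, and such a permutation is unique, so
`v(γ)` commutes with `rev`. The positions `i ≤ n` with `v(γ)(i) > n` are the minus signs and the
right ends of pairs in the first half; `τ` matches those right ends with the pairs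
`i < τ(i) ≤ n`, so their number is the quantity whose parity defines a type D clan.
-/

open Finset

theorem Equiv.Perm.val_eq_card_filter_lt {m : ℕ} (π : Equiv.Perm (Fin m)) (i : Fin m) :
    (π i : ℕ) = #{j | π j < π i} := by
  rw [← Fin.card_Iio, ← card_map π.symm.toEmbedding]
  congr 1
  ext j
  simp

structure IsStablePartition {m : ℕ} (p : Fin m → Prop) (c : ℕ) (π : Equiv.Perm (Fin m)) :
    Prop where
  prop_iff_lt : ∀ i, p i ↔ (π i : ℕ) < c
  strictMonoOn_pos : StrictMonoOn π {i | p i}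
  strictMonoOn_neg : StrictMonoOn π {i | ¬ p i}

namespace IsStablePartition

variable {m c : ℕ} {p : Fin m → Prop} {π σ : Equiv.Perm (Fin m)}

theorem revPerm_mul_mul_revPerm (hπ : IsStablePartition p c π) :
    IsStablePartition (fun i => ¬ p i.rev) (m - c) (Fin.revPerm * π * Fin.revPerm) where
  prop_iff_lt i := by
    simp only [Equiv.Perm.mul_apply, Fin.revPerm_apply, Fin.val_rev, hπ.prop_iff_lt]
    omega
  strictMonoOn_pos i hi j hj hij := by
    simpa using hπ.strictMonoOn_neg hj hi (Fin.rev_lt_rev.2 hij)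
  strictMonoOn_neg i hi j hj hij := by
    simpa using hπ.strictMonoOn_pos (not_not.1 hj) (not_not.1 hi) (Fin.rev_lt_rev.2 hij)

variable [DecidablePred p]

theorem val_of_pos (hπ : IsStablePartition p c π) {i : Fin m} (hi : p i) :
    (π i : ℕ) = #{j | p j ∧ j < i} := by
  rw [π.val_eq_card_filter_lt]
  congr 1
  ext j
  simp only [mem_filter, mem_univ, true_and]
  constructor
  · intro hji
    have hj : p j := (hπ.prop_iff_lt j).2 (lt_trans hji ((hπ.prop_iff_lt i).1 hi))
    exact ⟨hj, (hπ.strictMonoOn_pos.lt_iff_lt hj hi).1 hji⟩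
  · rintro ⟨hj, hji⟩
    exact hπ.strictMonoOn_pos hj hi hji

theorem val_of_neg (hπ : IsStablePartition p c π) {i : Fin m} (hi : ¬ p i) :
    (π i : ℕ) = #{j | p j} + #{j | ¬ p j ∧ j < i} := by
  rw [π.val_eq_card_filter_lt, ← card_union_of_disjoint (disjoint_filter.2 fun _ _ h h' => h'.1 h),
    ← filter_or]
  congr 1
  ext j
  simp only [mem_filter, mem_univ, true_and]
  by_cases hj : p j
  · have hπi : c ≤ (π i : ℕ) := not_lt.1 (mt (hπ.prop_iff_lt i).2 hi)
    exact iff_of_true (Fin.lt_def.2 (lt_of_lt_of_le ((hπ.prop_iff_lt j).1 hj) hπi)) (Or.inl hj)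
  · simp only [hj, false_or, not_false_eq_true, true_and]
    exact hπ.strictMonoOn_neg.lt_iff_lt hj hi

theorem unique (hπ : IsStablePartition p c π) (hσ : IsStablePartition p c σ) : π = σ := by
  ext i
  by_cases hi : p i
  · rw [hπ.val_of_pos hi, hσ.val_of_pos hi]
  · rw [hπ.val_of_neg hi, hσ.val_of_neg hi]

end IsStablePartition

section Clan

variable {α : Type*} [LinearOrder α] {τ : Equiv.Perm α} {s : α → ℤ}

/-- Membership in the set `A′` defining `v(γ)`. -/
def IsPlusOrLeftEnd (τ : Equiv.Perm α) (s : α → ℤ) (i : α) : Prop :=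
  (τ i = i ∧ s i = 1) ∨ i < τ i

instance : DecidablePred (IsPlusOrLeftEnd τ s) := fun i =>
  inferInstanceAs (Decidable ((τ i = i ∧ s i = 1) ∨ i < τ i))

theorem not_isPlusOrLeftEnd_iff {i : α} (hsgn : τ i = i → s i = 1 ∨ s i = -1) :
    ¬ IsPlusOrLeftEnd τ s i ↔ (τ i = i ∧ s i = -1) ∨ τ i < i := by
  unfold IsPlusOrLeftEnd
  rcases lt_trichotomy i (τ i) with h | h | h
  · simp [h, h.ne', h.not_gt]
  · rcases hsgn h.symm with hs | hs <;> simp [← h, hs]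
  · simp [h, h.ne, h.not_gt]

theorem card_filter_and_not_isPlusOrLeftEnd (hinv : Function.Involutive τ)
    (hsgn : ∀ i, τ i = i → s i = 1 ∨ s i = -1) (q : α → Prop) [Fintype α] [DecidablePred q] :
    #{i | q i ∧ ¬ IsPlusOrLeftEnd τ s i}
      = #{i | q i ∧ τ i = i ∧ s i = -1} + #{i | i < τ i ∧ q (τ i)} := by
  have hright : #{i | q i ∧ τ i < i} = #{i | i < τ i ∧ q (τ i)} :=
    card_nbij' τ τ (fun i hi => by simp_all [hinv i]) (fun i hi => by simp_all [hinv i])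
      (fun i _ => hinv i) (fun i _ => hinv i)
  rw [← hright, ← card_union_of_disjoint, ← filter_or]
  · congr 1
    ext i
    simp only [mem_filter, mem_univ, true_and, not_isPlusOrLeftEnd_iff (hsgn i)]
    tauto
  · exact disjoint_filter.2 fun i _ h h' => h'.2.ne h.2.1

end Clan

theorem isPlusOrLeftEnd_rev_iff {m : ℕ} {τ : Equiv.Perm (Fin m)} {s : Fin m → ℤ} {i : Fin m}
    (hsgn : τ i = i → s i = 1 ∨ s i = -1) (hskew₁ : τ i.rev = (τ i).rev)
    (hskew₂ : τ i = i → s i.rev = - s i) :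
    IsPlusOrLeftEnd τ s i.rev ↔ ¬ IsPlusOrLeftEnd τ s i := by
  rw [not_isPlusOrLeftEnd_iff hsgn, IsPlusOrLeftEnd, hskew₁, Fin.rev_inj, Fin.rev_lt_rev]
  refine or_congr_left (and_congr_right fun hfix => ?_)
  rw [hskew₂ hfix]
  omega

theorem stmt_4_general (n : ℕ)
    (τ : Equiv.Perm (Fin (2 * n))) (s : Fin (2 * n) → ℤ)
    -- τ is an involution
    (hinv : ∀ i, τ (τ i) = i)
    -- signs of fixed points are ±1
    (hsgn : ∀ i, τ i = i → s i = 1 ∨ s i = -1)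
    -- skew-symmetry
    (hskew₁ : ∀ i, τ i.rev = (τ i).rev)
    (hskew₂ : ∀ i, τ i = i → τ i.rev = i.rev ∧ s i.rev = - s i)
    -- type D conditions
    (hD₂ : Even ((Finset.univ.filter (fun i : Fin (2 * n) =>
              (i : ℕ) < n ∧ τ i = i ∧ s i = -1)).card
          + (Finset.univ.filter (fun i : Fin (2 * n) =>
              i < τ i ∧ (τ i : ℕ) < n)).card))
    -- π = v(γ)
    (π : Equiv.Perm (Fin (2 * n)))
    (hπmem : ∀ i, ((τ i = i ∧ s i = 1) ∨ i < τ i) ↔ (π i : ℕ) < n)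
    (hπincA : ∀ i j : Fin (2 * n), ((τ i = i ∧ s i = 1) ∨ i < τ i) →
        ((τ j = j ∧ s j = 1) ∨ j < τ j) → i < j → π i < π j)
    (hπincB : ∀ i j : Fin (2 * n), ¬ ((τ i = i ∧ s i = 1) ∨ i < τ i) →
        ¬ ((τ j = j ∧ s j = 1) ∨ j < τ j) → i < j → π i < π j) :
    (∀ k : Fin (2 * n), π k.rev = (π k).rev) ∧
    Even (Finset.univ.filter (fun i : Fin (2 * n) =>
        (i : ℕ) < n ∧ n ≤ (π i : ℕ))).card := by
  have hπ : IsStablePartition (IsPlusOrLeftEnd τ s) n π :=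
    ⟨hπmem, fun i hi j hj => hπincA i j hi hj, fun i hi j hj => hπincB i j hi hj⟩
  have hconj : Fin.revPerm * π * Fin.revPerm = π := by
    have h := hπ.revPerm_mul_mul_revPerm
    simp only [isPlusOrLeftEnd_rev_iff (hsgn _) (hskew₁ _) (fun h => (hskew₂ _ h).2), not_not,
      show 2 * n - n = n by omega] at h
    exact h.unique hπ
  refine ⟨fun k => ?_, ?_⟩
  · simpa using (congrArg (· k.rev) hconj).symm
  · have hcount : #{i : Fin (2 * n) | (i : ℕ) < n ∧ n ≤ (π i : ℕ)}
        = #{i : Fin (2 * n) | (i : ℕ) < n ∧ ¬ IsPlusOrLeftEnd τ s i} := by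
      simp only [hπ.prop_iff_lt, not_lt]
    rwa [hcount, card_filter_and_not_isPlusOrLeftEnd hinv hsgn]

/-- For a type D clan `γ = (τ, s)` on `2n` positions (a skew-symmetric
`(n,n)`-clan with `τ i ≠ i.rev` for all `i` and with
`#{i ≤ n : τ i = i ∧ s i = -1} + #{i : i < τ i ≤ n}` even) avoiding the pattern
`(1,2,1,2)`, the permutation `v(γ)` is a type D element of `S_{2n}`:
it is a signed element and `#{i ∈ {1,…,n} : v(γ)(i) > n}` is even.
(Positions/values are modeled zero-based by `Fin (2*n)`: "`i ≤ n`" becomes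
`(i : ℕ) < n` and "value `> n`" becomes `n ≤ (π i : ℕ)`.) -/
theorem stmt_4 (n : ℕ) (hn : 1 ≤ n)
    (τ : Equiv.Perm (Fin (2 * n))) (s : Fin (2 * n) → ℤ)
    -- τ is an involution
    (hinv : ∀ i, τ (τ i) = i)
    -- signs of fixed points are ±1
    (hsgn : ∀ i, τ i = i → s i = 1 ∨ s i = -1)
    -- (n,n)-clan: #(plus fixed points) - #(minus fixed points) = n - n = 0
    (hbal : (Finset.univ.filter (fun i => τ i = i ∧ s i = 1)).card
          = (Finset.univ.filter (fun i => τ i = i ∧ s i = -1)).card)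
    -- skew-symmetry
    (hskew₁ : ∀ i, τ i.rev = (τ i).rev)
    (hskew₂ : ∀ i, τ i = i → τ i.rev = i.rev ∧ s i.rev = - s i)
    -- type D conditions
    (hD₁ : ∀ i : Fin (2 * n), τ i ≠ i.rev)
    (hD₂ : Even ((Finset.univ.filter (fun i : Fin (2 * n) =>
              (i : ℕ) < n ∧ τ i = i ∧ s i = -1)).card
          + (Finset.univ.filter (fun i : Fin (2 * n) =>
              i < τ i ∧ (τ i : ℕ) < n)).card))
    -- γ avoids the pattern (1,2,1,2)
    (havoid : ¬ ∃ i j k l : Fin (2 * n), i < j ∧ j < k ∧ k < l ∧ τ i = k ∧ τ j = l)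
    -- π = v(γ)
    (π : Equiv.Perm (Fin (2 * n)))
    (hπmem : ∀ i, ((τ i = i ∧ s i = 1) ∨ i < τ i) ↔ (π i : ℕ) < n)
    (hπincA : ∀ i j : Fin (2 * n), ((τ i = i ∧ s i = 1) ∨ i < τ i) →
        ((τ j = j ∧ s j = 1) ∨ j < τ j) → i < j → π i < π j)
    (hπincB : ∀ i j : Fin (2 * n), ¬ ((τ i = i ∧ s i = 1) ∨ i < τ i) →
        ¬ ((τ j = j ∧ s j = 1) ∨ j < τ j) → i < j → π i < π j) :
    (∀ k : Fin (2 * n), π k.rev = (π k).rev) ∧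
    Even (Finset.univ.filter (fun i : Fin (2 * n) =>
        (i : ℕ) < n ∧ n ≤ (π i : ℕ))).card :=
  stmt_4_general n τ s hinv hsgn hskew₁ hskew₂ hD₂ π hπmem hπincA hπincB
end

section
/- Let n ≥ 1 and g ∈ GL(2n, ℂ). Then g satisfies both gᵀ J_{2n} g = J_{2n} and I_{n,n} g I_{n,n} = g if and only if there exists A ∈ GL(n, ℂ) such that g = fromBlocks(A, 0; 0, J_n (Aᵀ)⁻¹ J_n). Moreover, every such g has determinant 1, hence lies in SO(2n, ℂ) for this form; thus the fixed subgroup of int(I_{n,n}) on SO(2n,ℂ) is isomorphic to GL(n, ℂ). -/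
open Matrix

/-- The `n × n` antidiagonal matrix `J_n` over `ℂ`: `(J_n)_{ij} = 1` iff
`i + j = n + 1` one-based, i.e. `i + j + 1 = n` zero-based. -/
def Jmat (n : ℕ) : Matrix (Fin n) (Fin n) ℂ :=
  Matrix.of fun i j => if (i : ℕ) + (j : ℕ) + 1 = n then 1 else 0

/-- `J_{2n} = fromBlocks 0 J_n J_n 0`, the `2n × 2n` antidiagonal identity. -/
def J2n (n : ℕ) : Matrix (Fin n ⊕ Fin n) (Fin n ⊕ Fin n) ℂ :=
  Matrix.fromBlocks 0 (Jmat n) (Jmat n) 0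

/-- `I_{n,n} = fromBlocks 1 0 0 (-1)`. -/
def Inn (n : ℕ) : Matrix (Fin n ⊕ Fin n) (Fin n ⊕ Fin n) ℂ :=
  Matrix.fromBlocks 1 0 0 (-1)

lemma Jmat_apply {n : ℕ} (i j : Fin n) :
    Jmat n i j = if j = Fin.rev i then 1 else 0 := by
  have hi := i.isLt; have hj := j.isLt
  simp only [Jmat, of_apply]
  by_cases h : (i : ℕ) + (j : ℕ) + 1 = n
  · rw [if_pos h, if_pos (by ext; rw [Fin.val_rev]; omega)]
  · rw [if_neg h, if_neg]
    intro hc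
    have : (j : ℕ) = n - (i + 1) := by rw [hc, Fin.val_rev]
    omega

lemma Jmat_transpose (n : ℕ) : (Jmat n)ᵀ = Jmat n := by
  ext i j; simp only [transpose_apply, Jmat, of_apply]
  rw [Nat.add_comm (j : ℕ)]

lemma Jmat_mul_Jmat (n : ℕ) : Jmat n * Jmat n = 1 := by
  ext i j
  rw [mul_apply]
  simp only [Jmat_apply]
  rw [Finset.sum_eq_single (Fin.rev i)]
  · simp [Fin.rev_rev, one_apply, eq_comm]
  · intro k _ hk; rw [if_neg hk, zero_mul]
  · intro h; exact absurd (Finset.mem_univ _) h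

lemma Jmat_cancel {n : ℕ} (Z : Matrix (Fin n) (Fin n) ℂ) :
    Jmat n * (Jmat n * Z) = Z := by
  rw [← Matrix.mul_assoc, Jmat_mul_Jmat, Matrix.one_mul]

lemma aux1 {n : ℕ} (A : Matrix (Fin n) (Fin n) ℂ) (h : IsUnit A.det) :
    (Jmat n * (Aᵀ)⁻¹ * Jmat n) * (Jmat n * Aᵀ * Jmat n) = 1 := by
  have ht : IsUnit Aᵀ.det := isUnit_det_transpose _ h
  calc (Jmat n * (Aᵀ)⁻¹ * Jmat n) * (Jmat n * Aᵀ * Jmat n)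
      = Jmat n * ((Aᵀ)⁻¹ * ((Jmat n * Jmat n) * Aᵀ)) * Jmat n := by
        simp only [Matrix.mul_assoc]
    _ = 1 := by
        rw [Jmat_mul_Jmat, Matrix.one_mul, nonsing_inv_mul _ ht, Matrix.mul_one,
          Jmat_mul_Jmat]

lemma aux2 {n : ℕ} (A : Matrix (Fin n) (Fin n) ℂ) (h : IsUnit A.det) :
    (Jmat n * Aᵀ * Jmat n) * (Jmat n * (Aᵀ)⁻¹ * Jmat n) = 1 := by
  have ht : IsUnit Aᵀ.det := isUnit_det_transpose _ h
  calc (Jmat n * Aᵀ * Jmat n) * (Jmat n * (Aᵀ)⁻¹ * Jmat n)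
      = Jmat n * (Aᵀ * ((Jmat n * Jmat n) * (Aᵀ)⁻¹)) * Jmat n := by
        simp only [Matrix.mul_assoc]
    _ = 1 := by
        rw [Jmat_mul_Jmat, Matrix.one_mul, mul_nonsing_inv _ ht, Matrix.mul_one,
          Jmat_mul_Jmat]

/-- The unit `fromBlocks A 0 0 (J (Aᵀ)⁻¹ J)` for `A ∈ GL(n,ℂ)`. -/
noncomputable def phiU {n : ℕ} (A : GL (Fin n) ℂ) : GL (Fin n ⊕ Fin n) ℂ where
  val := Matrix.fromBlocks (A : Matrix (Fin n) (Fin n) ℂ) 0 0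
    (Jmat n * ((A : Matrix (Fin n) (Fin n) ℂ)ᵀ)⁻¹ * Jmat n)
  inv := Matrix.fromBlocks ((A⁻¹ : GL (Fin n) ℂ) : Matrix (Fin n) (Fin n) ℂ) 0 0
    (Jmat n * (A : Matrix (Fin n) (Fin n) ℂ)ᵀ * Jmat n)
  val_inv := by
    rw [fromBlocks_multiply]
    simp only [Matrix.mul_zero, Matrix.zero_mul, add_zero, zero_add,
      aux1 _ (isUnits_det_units A), ← Units.val_mul, mul_inv_cancel, Units.val_one]
    exact fromBlocks_one
  inv_val := by
    rw [fromBlocks_multiply]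
    simp only [Matrix.mul_zero, Matrix.zero_mul, add_zero, zero_add,
      aux2 _ (isUnits_det_units A), ← Units.val_mul, inv_mul_cancel, Units.val_one]
    exact fromBlocks_one

lemma bwd {n : ℕ} (A : Matrix (Fin n) (Fin n) ℂ) (h : IsUnit A.det) :
    (Matrix.fromBlocks A 0 0 (Jmat n * (Aᵀ)⁻¹ * Jmat n))ᵀ * J2n n *
      (Matrix.fromBlocks A 0 0 (Jmat n * (Aᵀ)⁻¹ * Jmat n)) = J2n n ∧
    Inn n * (Matrix.fromBlocks A 0 0 (Jmat n * (Aᵀ)⁻¹ * Jmat n)) * Inn n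
      = Matrix.fromBlocks A 0 0 (Jmat n * (Aᵀ)⁻¹ * Jmat n) := by
  have ht : IsUnit Aᵀ.det := isUnit_det_transpose _ h
  constructor
  · rw [J2n, fromBlocks_transpose, fromBlocks_multiply, fromBlocks_multiply]
    simp only [Matrix.mul_zero, Matrix.zero_mul, zero_add, add_zero,
      transpose_zero, transpose_mul, Jmat_transpose, transpose_nonsing_inv,
      transpose_transpose, Matrix.mul_assoc, Jmat_cancel]
    rw [mul_nonsing_inv_cancel_left _ _ ht, nonsing_inv_mul _ h, Matrix.mul_one]
  · rw [Inn, fromBlocks_multiply, fromBlocks_multiply]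
    simp

lemma fwd {n : ℕ} (g : GL (Fin n ⊕ Fin n) ℂ)
    (h1 : (g : Matrix (Fin n ⊕ Fin n) (Fin n ⊕ Fin n) ℂ)ᵀ * J2n n * g = J2n n)
    (h2 : Inn n * (g : Matrix (Fin n ⊕ Fin n) (Fin n ⊕ Fin n) ℂ) * Inn n = g) :
    ∃ A : GL (Fin n) ℂ,
      (g : Matrix (Fin n ⊕ Fin n) (Fin n ⊕ Fin n) ℂ)
        = Matrix.fromBlocks (A : Matrix (Fin n) (Fin n) ℂ) 0 0
            (Jmat n * ((A : Matrix (Fin n) (Fin n) ℂ)ᵀ)⁻¹ * Jmat n) := by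
  set M := (g : Matrix (Fin n ⊕ Fin n) (Fin n ⊕ Fin n) ℂ) with hM
  obtain ⟨A, B, C, D, hMb⟩ : ∃ A B C D, M = Matrix.fromBlocks A B C D :=
    ⟨_, _, _, _, (fromBlocks_toBlocks M).symm⟩
  rw [hMb, Inn, fromBlocks_multiply, fromBlocks_multiply] at h2
  simp only [Matrix.mul_zero, Matrix.zero_mul, Matrix.mul_one, Matrix.one_mul,
    add_zero, zero_add, Matrix.mul_neg, Matrix.neg_mul, neg_neg, neg_zero] at h2
  have hB : B = 0 := by
    have h := congrArg Matrix.toBlocks₁₂ h2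
    simp only [toBlocks_fromBlocks₁₂] at h
    ext i j
    have h' := congrFun (congrFun h i) j
    simp only [Matrix.neg_apply, Matrix.zero_apply] at h' ⊢
    linear_combination (-1/2 : ℂ) * h'
  have hC : C = 0 := by
    have h := congrArg Matrix.toBlocks₂₁ h2
    simp only [toBlocks_fromBlocks₂₁] at h
    ext i j
    have h' := congrFun (congrFun h i) j
    simp only [Matrix.neg_apply, Matrix.zero_apply] at h' ⊢
    linear_combination (-1/2 : ℂ) * h'
  subst hB hC
  have hdet : IsUnit M.det := by rw [hM]; exact isUnits_det_units g
  rw [hMb, det_fromBlocks_zero₂₁] at hdet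
  have hA : IsUnit A.det := isUnit_iff_ne_zero.mpr (left_ne_zero_of_mul hdet.ne_zero)
  obtain ⟨u, hu⟩ := (isUnit_iff_isUnit_det A).mpr hA
  have ht : IsUnit Aᵀ.det := isUnit_det_transpose _ hA
  rw [hMb, J2n, fromBlocks_transpose, fromBlocks_multiply, fromBlocks_multiply] at h1
  have h12 := congrArg Matrix.toBlocks₁₂ h1
  simp only [toBlocks_fromBlocks₁₂, transpose_zero, Matrix.mul_zero, Matrix.zero_mul,
    zero_add, add_zero] at h12
  have hD' : D = Jmat n * (Aᵀ)⁻¹ * Jmat n := by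
    have step1 : Jmat n * D = (Aᵀ)⁻¹ * Jmat n := by
      calc Jmat n * D = (Aᵀ)⁻¹ * (Aᵀ * (Jmat n * D)) :=
            (nonsing_inv_mul_cancel_left _ _ ht).symm
        _ = (Aᵀ)⁻¹ * (Aᵀ * Jmat n * D) := by rw [Matrix.mul_assoc (Aᵀ)]
        _ = (Aᵀ)⁻¹ * Jmat n := by rw [h12]
    calc D = Jmat n * (Jmat n * D) := (Jmat_cancel D).symm
      _ = Jmat n * ((Aᵀ)⁻¹ * Jmat n) := by rw [step1]
      _ = Jmat n * (Aᵀ)⁻¹ * Jmat n := by rw [Matrix.mul_assoc]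
  exact ⟨u, by rw [hMb, hD', hu]⟩

/-- determinant of the block matrix is 1 -/
lemma det_one_of_block {n : ℕ} (A : Matrix (Fin n) (Fin n) ℂ) (h : IsUnit A.det) :
    (Matrix.fromBlocks A 0 0 (Jmat n * (Aᵀ)⁻¹ * Jmat n)).det = 1 := by
  have ha : A.det ≠ 0 := h.ne_zero
  have ht : IsUnit Aᵀ.det := isUnit_det_transpose _ h
  have hJ : (Jmat n).det * (Jmat n).det = 1 := by
    rw [← det_mul, Jmat_mul_Jmat, det_one]
  rw [det_fromBlocks_zero₂₁, det_mul, det_mul, det_nonsing_inv,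
    Ring.inverse_eq_inv, det_transpose]
  field_simp
  linear_combination hJ

/-- `g ∈ GL(2n,ℂ)` satisfies both `gᵀ J_{2n} g = J_{2n}` and
`I_{n,n} g I_{n,n} = g` iff `g = fromBlocks A 0 0 (J_n (Aᵀ)⁻¹ J_n)` for some
`A ∈ GL(n,ℂ)`.  Moreover every such `g` has determinant `1`, hence lies in
`SO(2n,ℂ)`; and `A ↦ fromBlocks A 0 0 (J_n (Aᵀ)⁻¹ J_n)` is an injective group
homomorphism, so the fixed subgroup of `int(I_{n,n})` on `SO(2n,ℂ)` is
isomorphic to `GL(n,ℂ)`. -/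
theorem stmt_16 (n : ℕ) (hn : 1 ≤ n) :
    (∀ g : GL (Fin n ⊕ Fin n) ℂ,
      ((g : Matrix (Fin n ⊕ Fin n) (Fin n ⊕ Fin n) ℂ)ᵀ * J2n n * g = J2n n ∧
        Inn n * (g : Matrix (Fin n ⊕ Fin n) (Fin n ⊕ Fin n) ℂ) * Inn n = g) ↔
      ∃ A : GL (Fin n) ℂ,
        (g : Matrix (Fin n ⊕ Fin n) (Fin n ⊕ Fin n) ℂ)
          = Matrix.fromBlocks (A : Matrix (Fin n) (Fin n) ℂ) 0 0
              (Jmat n * ((A : Matrix (Fin n) (Fin n) ℂ)ᵀ)⁻¹ * Jmat n)) ∧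
    (∀ g : GL (Fin n ⊕ Fin n) ℂ,
      ((g : Matrix (Fin n ⊕ Fin n) (Fin n ⊕ Fin n) ℂ)ᵀ * J2n n * g = J2n n ∧
        Inn n * (g : Matrix (Fin n ⊕ Fin n) (Fin n ⊕ Fin n) ℂ) * Inn n = g) →
      (g : Matrix (Fin n ⊕ Fin n) (Fin n ⊕ Fin n) ℂ).det = 1) ∧
    ∃ φ : GL (Fin n) ℂ →* GL (Fin n ⊕ Fin n) ℂ,
      Function.Injective φ ∧
      ∀ A : GL (Fin n) ℂ,
        (φ A : Matrix (Fin n ⊕ Fin n) (Fin n ⊕ Fin n) ℂ)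
          = Matrix.fromBlocks (A : Matrix (Fin n) (Fin n) ℂ) 0 0
              (Jmat n * ((A : Matrix (Fin n) (Fin n) ℂ)ᵀ)⁻¹ * Jmat n) := by
  refine ⟨fun g => ⟨fun ⟨h1, h2⟩ => fwd g h1 h2, ?_⟩, fun g ⟨h1, h2⟩ => ?_, ?_⟩
  · rintro ⟨A, hA⟩
    rw [hA]
    exact bwd _ (isUnits_det_units A)
  · obtain ⟨A, hA⟩ := fwd g h1 h2
    rw [hA]
    exact det_one_of_block _ (isUnits_det_units A)
  · refine ⟨{ toFun := phiU
              map_one' := ?_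
              map_mul' := ?_ }, ?_, fun A => rfl⟩
    · apply Units.ext
      show Matrix.fromBlocks _ _ _ _ = _
      rw [Units.val_one, Units.val_one, transpose_one, inv_one, Matrix.mul_one,
        Jmat_mul_Jmat]
      exact fromBlocks_one
    · intro A B
      apply Units.ext
      show Matrix.fromBlocks _ _ _ _ = _
      show _ = Matrix.fromBlocks _ _ _ _ * Matrix.fromBlocks _ _ _ _
      rw [fromBlocks_multiply]
      simp only [Matrix.mul_zero, Matrix.zero_mul, add_zero, zero_add, Units.val_mul]
      have hD : Jmat n * ((((A : Matrix (Fin n) (Fin n) ℂ))ᵀ)⁻¹ *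
              (((B : Matrix (Fin n) (Fin n) ℂ))ᵀ)⁻¹) * Jmat n
          = Jmat n * (((A : Matrix (Fin n) (Fin n) ℂ))ᵀ)⁻¹ * Jmat n *
              (Jmat n * (((B : Matrix (Fin n) (Fin n) ℂ))ᵀ)⁻¹ * Jmat n) := by
        conv_rhs => simp only [Matrix.mul_assoc]
        rw [Jmat_cancel]
        simp only [Matrix.mul_assoc]
      rw [transpose_mul, Matrix.mul_inv_rev, hD]
    · intro A B h
      apply Units.ext
      have h' := congrArg (fun u : GL (Fin n ⊕ Fin n) ℂ =>
        Matrix.toBlocks₁₁ (u : Matrix (Fin n ⊕ Fin n) (Fin n ⊕ Fin n) ℂ)) h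
      simpa [phiU, toBlocks_fromBlocks₁₁] using h'
end
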